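/- arXiv:1603.04132 — 3 statements merged into one kernel-verified Lean document; each statement's English description precedes it below -/
import Mathlib

section
/- Let n_j = (a_j, b_j, c_j) ∈ ℝ³ for j = 1, 2, 3, 4 be vectors such that every 3-element subset of {n1, n2, n3, n4} is linearly independent, and let x1, x2, x3 ∈ ℝ be pairwise distinct and z1, z2, z3 ∈ ℝ arbitrary. Define the 6×9 real matrix 𝒜 whose rows are: row 1 = (a1, b1, c1, a1·x1, b1·x1, c1·x1, a1·z1, b1·z1, c1·z1); row 2 = (a2, b2, c2, a2·x2, b2·x2, c2·x2, a2·z2, b2·z2, c2·z2); row 3 = (a3, b3, c3, a3·x1, b3·x1, c3·x1, a3·z1, b3·z1, c3·z1); row 4 = (a3, b3, c3, a3·x3, b3·x3, c3·x3, a3·z3, b3·z3, c3·z3); row 5 = (a4, b4, c4, a4·x2, b4·x2, c4·x2, a4·z2, b4·z2, c4·z2); row 6 = (a4, b4, c4, a4·x3, b4·x3, c4·x3, a4·z3, b4·z3, c4·z3). Then the six rows of 𝒜 are linearly independent, i.e., the rank of 𝒜 equals 6. -/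
/-!
Columns 1–3 and 4–6 of a row relation `g` say `∑ gᵢ • nᵢ' = 0` and `∑ (gᵢ * xᵢ') • nᵢ' = 0`, where
`nᵢ'` is the plane normal and `xᵢ'` the laser abscissa of row `i`. Subtracting `t` times the first
relation from the second and taking `t = x₁` removes `n₁`, so independence of `n₂, n₃, n₄` kills
three combinations of the `gᵢ`; `t = x₂` removes `n₂` and independence of `n₁, n₃, n₄` kills three
more. Since the `xᵢ` are distinct, all six `gᵢ` vanish.
-/

section
variable {R M : Type*} [Ring R] [AddCommGroup M] [Module R M]

theorem LinearIndependent.eq_zero_of_smul_add_smul_add_smul_eq_zero {u v w : M}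
    (h : LinearIndependent R ![u, v, w]) {a b c : R} (habc : a • u + b • v + c • w = 0) :
    a = 0 ∧ b = 0 ∧ c = 0 := by
  have := Fintype.linearIndependent_iff.1 h ![a, b, c] (by simpa [Fin.sum_univ_three])
  exact ⟨this 0, this 1, this 2⟩

end

section
variable {K M : Type*} [Field K] [AddCommGroup M] [Module K M]

theorem eq_zero_of_observation_relations {n₁ n₂ n₃ n₄ : M} {x₁ x₂ x₃ : K}
    (h134 : LinearIndependent K ![n₁, n₃, n₄]) (h234 : LinearIndependent K ![n₂, n₃, n₄])
    (hx₁₂ : x₁ ≠ x₂) (hx₁₃ : x₁ ≠ x₃) (hx₂₃ : x₂ ≠ x₃) {g : Fin 6 → K}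
    (hn : g 0 • n₁ + g 1 • n₂ + g 2 • n₃ + g 3 • n₃ + g 4 • n₄ + g 5 • n₄ = 0)
    (hxn : (g 0 * x₁) • n₁ + (g 1 * x₂) • n₂ + (g 2 * x₁) • n₃ + (g 3 * x₃) • n₃
      + (g 4 * x₂) • n₄ + (g 5 * x₃) • n₄ = 0) :
    g = 0 := by
  have shift (t : K) : (g 0 * (x₁ - t)) • n₁ + (g 1 * (x₂ - t)) • n₂
      + (g 2 * (x₁ - t) + g 3 * (x₃ - t)) • n₃ + (g 4 * (x₂ - t) + g 5 * (x₃ - t)) • n₄ = 0 := by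
    linear_combination (norm := module) hxn - t • hn
  obtain ⟨h1, h3, h45⟩ := h234.eq_zero_of_smul_add_smul_add_smul_eq_zero
    (by simpa only [sub_self, mul_zero, zero_smul, zero_add, add_zero] using shift x₁)
  obtain ⟨h0, h23, h5⟩ := h134.eq_zero_of_smul_add_smul_add_smul_eq_zero
    (by simpa only [sub_self, mul_zero, zero_smul, zero_add, add_zero] using shift x₂)
  have d₁₂ := sub_ne_zero.2 hx₁₂
  have d₂₁ := sub_ne_zero.2 hx₁₂.symm
  have d₃₁ := sub_ne_zero.2 hx₁₃.symm
  have d₃₂ := sub_ne_zero.2 hx₂₃.symm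
  have g0 : g 0 = 0 := (mul_eq_zero.1 h0).resolve_right d₁₂
  have g1 : g 1 = 0 := (mul_eq_zero.1 h1).resolve_right d₂₁
  have g3 : g 3 = 0 := (mul_eq_zero.1 h3).resolve_right d₃₁
  have g5 : g 5 = 0 := (mul_eq_zero.1 h5).resolve_right d₃₂
  have g2 : g 2 = 0 := by simpa [g3, d₁₂] using h23
  have g4 : g 4 = 0 := by simpa [g5, d₂₁] using h45
  ext i
  fin_cases i <;> assumption

end

theorem stmt_4_general (a1 b1 c1 a2 b2 c2 a3 b3 c3 a4 b4 c4 : ℝ) (x1 x2 x3 z1 z2 z3 : ℝ)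
    (h134 : LinearIndependent ℝ ![![a1, b1, c1], ![a3, b3, c3], ![a4, b4, c4]])
    (h234 : LinearIndependent ℝ ![![a2, b2, c2], ![a3, b3, c3], ![a4, b4, c4]])
    (hx12 : x1 ≠ x2) (hx13 : x1 ≠ x3) (hx23 : x2 ≠ x3) :
    let 𝒜 : Matrix (Fin 6) (Fin 9) ℝ :=
      !![a1, b1, c1, a1*x1, b1*x1, c1*x1, a1*z1, b1*z1, c1*z1;
         a2, b2, c2, a2*x2, b2*x2, c2*x2, a2*z2, b2*z2, c2*z2;
         a3, b3, c3, a3*x1, b3*x1, c3*x1, a3*z1, b3*z1, c3*z1;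
         a3, b3, c3, a3*x3, b3*x3, c3*x3, a3*z3, b3*z3, c3*z3;
         a4, b4, c4, a4*x2, b4*x2, c4*x2, a4*z2, b4*z2, c4*z2;
         a4, b4, c4, a4*x3, b4*x3, c4*x3, a4*z3, b4*z3, c4*z3]
    LinearIndependent ℝ (fun i => 𝒜 i) ∧ 𝒜.rank = 6 := by
  intro 𝒜
  have hLI : LinearIndependent ℝ (fun i => 𝒜 i) := by
    refine Fintype.linearIndependent_iff.2 fun g hg => congrFun ?_
    have col (k : Fin 9) := congrFun hg k
    simp only [Fin.sum_univ_six, Finset.sum_apply, Pi.smul_apply, smul_eq_mul, Pi.zero_apply] at col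
    refine eq_zero_of_observation_relations h134 h234 hx12 hx13 hx23 ?_ ?_
    · ext j; fin_cases j
      · simpa [𝒜] using col 0
      · simpa [𝒜] using col 1
      · simpa [𝒜] using col 2
    · ext j; fin_cases j
      · simpa [𝒜, mul_comm, mul_assoc, mul_left_comm] using col 3
      · simpa [𝒜, mul_comm, mul_assoc, mul_left_comm] using col 4
      · simpa [𝒜, mul_comm, mul_assoc, mul_left_comm] using col 5
  exact ⟨hLI, by simpa using hLI.rank_matrix⟩

/-- The six point-to-plane linear constraints of a single observation are linearly
independent: the 6×9 coefficient matrix 𝒜 has linearly independent rows, i.e. rank 6. -/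
theorem stmt_4 (a1 b1 c1 a2 b2 c2 a3 b3 c3 a4 b4 c4 : ℝ) (x1 x2 x3 z1 z2 z3 : ℝ)
    (h123 : LinearIndependent ℝ ![![a1, b1, c1], ![a2, b2, c2], ![a3, b3, c3]])
    (h124 : LinearIndependent ℝ ![![a1, b1, c1], ![a2, b2, c2], ![a4, b4, c4]])
    (h134 : LinearIndependent ℝ ![![a1, b1, c1], ![a3, b3, c3], ![a4, b4, c4]])
    (h234 : LinearIndependent ℝ ![![a2, b2, c2], ![a3, b3, c3], ![a4, b4, c4]])
    (hx12 : x1 ≠ x2) (hx13 : x1 ≠ x3) (hx23 : x2 ≠ x3) :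
    let 𝒜 : Matrix (Fin 6) (Fin 9) ℝ :=
      !![a1, b1, c1, a1*x1, b1*x1, c1*x1, a1*z1, b1*z1, c1*z1;
         a2, b2, c2, a2*x2, b2*x2, c2*x2, a2*z2, b2*z2, c2*z2;
         a3, b3, c3, a3*x1, b3*x1, c3*x1, a3*z1, b3*z1, c3*z1;
         a3, b3, c3, a3*x3, b3*x3, c3*x3, a3*z3, b3*z3, c3*z3;
         a4, b4, c4, a4*x2, b4*x2, c4*x2, a4*z2, b4*z2, c4*z2;
         a4, b4, c4, a4*x3, b4*x3, c4*x3, a4*z3, b4*z3, c4*z3]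
    LinearIndependent ℝ (fun i => 𝒜 i) ∧ 𝒜.rank = 6 :=
  stmt_4_general a1 b1 c1 a2 b2 c2 a3 b3 c3 a4 b4 c4 x1 x2 x3 z1 z2 z3 h134 h234 hx12 hx13 hx23
end

section
/- For i = 1, …, 6 let n̄_i ∈ ℝ³, x̄_i, z̄_i, d̄_i ∈ ℝ. Let N be the 6×3 matrix with i-th row n̄_iᵀ, N_x the 6×3 matrix with i-th row x̄_i·n̄_iᵀ, N_z the 6×3 matrix with i-th row z̄_i·n̄_iᵀ, and D ∈ ℝ⁶ the vector with entries d̄_i. Set N_o = Nᵀ·N, N_α = Nᵀ·N_x, N_γ = Nᵀ·N_z, D_n = Nᵀ·D, and assume N_o is invertible. Define G_x = N_x − N·N_o⁻¹·N_α, G_z = N_z − N·N_o⁻¹·N_γ, and G_d = D − N·N_o⁻¹·D_n. Suppose the vectors r1, r3, t ∈ ℝ³ satisfy the six exact constraints ⟪n̄_i, x̄_i·r1 + z̄_i·r3 + t⟫ = d̄_i for all i = 1, …, 6. Then (i) t = N_o⁻¹ (D_n − N_α·r1 − N_γ·r3), and (ii) G_x·r1 + G_z·r3 = G_d. -/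
/-!
Stacking the six constraints gives `Nx r1 + Nz r3 + N t = D`. Multiplying by `Nᵀ` yields the
normal equations `Nα r1 + Nγ r3 + No t = Dn`, which determine `t` as soon as `No = NᵀN` is
invertible. Substituting back, the residual map `I - N No⁻¹ Nᵀ` annihilates `N t`, so applying it
to the stacked equation leaves `Gx r1 + Gz r3 = Gd`.
-/

open Matrix

namespace Matrix

variable {m n R : Type*} [Fintype n]

theorem of_mul_row_mulVec [Semiring R] (c : m → R) (A : m → n → R) (v : n → R) :
    (of fun i j => c i * A i j) *ᵥ v = fun i => c i * (A i ⬝ᵥ v) := by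
  funext i
  simp only [mulVec, dotProduct, of_apply, Finset.mul_sum, mul_assoc]

theorem stacked_eq_of_forall_dotProduct_eq [CommSemiring R] (A : m → n → R) (x z d : m → R)
    (u w t : n → R)
    (h : ∀ i, A i ⬝ᵥ (x i • u + z i • w + t) = d i) :
    (of fun i j => x i * A i j) *ᵥ u + (of fun i j => z i * A i j) *ᵥ w + of A *ᵥ t = d := by
  rw [of_mul_row_mulVec, of_mul_row_mulVec]
  funext i
  simpa only [Pi.add_apply, mulVec, of_apply, dotProduct_add, dotProduct_smul, smul_eq_mul]
    using h i

variable [Fintype m] [DecidableEq n] [CommRing R] (N : Matrix m n R) (hN : IsUnit (Nᵀ * N))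
include hN

theorem gram_inv_mulVec_transpose_mulVec_mulVec (t : n → R) :
    (Nᵀ * N)⁻¹ *ᵥ (Nᵀ *ᵥ (N *ᵥ t)) = t := by
  rw [mulVec_mulVec, mulVec_mulVec, Matrix.mul_assoc,
    nonsing_inv_mul _ ((isUnit_iff_isUnit_det _).mp hN), one_mulVec]

theorem eq_gram_inv_mulVec_of_add_mulVec_eq {w d : m → R} {t : n → R} (h : w + N *ᵥ t = d) :
    t = (Nᵀ * N)⁻¹ *ᵥ (Nᵀ *ᵥ d - Nᵀ *ᵥ w) := by
  rw [← h, mulVec_add, add_sub_cancel_left, gram_inv_mulVec_transpose_mulVec_mulVec N hN]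

theorem sub_projection_mulVec_eq_of_add_mulVec_eq {w d : m → R} {t : n → R}
    (h : w + N *ᵥ t = d) :
    w - N *ᵥ ((Nᵀ * N)⁻¹ *ᵥ (Nᵀ *ᵥ w)) = d - N *ᵥ ((Nᵀ * N)⁻¹ *ᵥ (Nᵀ *ᵥ d)) := by
  rw [← h, mulVec_add, mulVec_add, mulVec_add, gram_inv_mulVec_transpose_mulVec_mulVec N hN]
  abel

end Matrix

/-- Elimination of the translation from the six point-to-plane constraints
(the paper's equations (13) and (15)). -/
theorem stmt_6 (nbar : Fin 6 → (Fin 3 → ℝ)) (xbar zbar dbar : Fin 6 → ℝ)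
    (r1 r3 t : Fin 3 → ℝ)
    (hconstraints : ∀ i, nbar i ⬝ᵥ (xbar i • r1 + zbar i • r3 + t) = dbar i) :
    let N : Matrix (Fin 6) (Fin 3) ℝ := Matrix.of fun i j => nbar i j
    let Nx : Matrix (Fin 6) (Fin 3) ℝ := Matrix.of fun i j => xbar i * nbar i j
    let Nz : Matrix (Fin 6) (Fin 3) ℝ := Matrix.of fun i j => zbar i * nbar i j
    let No : Matrix (Fin 3) (Fin 3) ℝ := Nᵀ * N
    let Nα : Matrix (Fin 3) (Fin 3) ℝ := Nᵀ * Nx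
    let Nγ : Matrix (Fin 3) (Fin 3) ℝ := Nᵀ * Nz
    let Dn : Fin 3 → ℝ := Nᵀ *ᵥ dbar
    let Gx : Matrix (Fin 6) (Fin 3) ℝ := Nx - N * No⁻¹ * Nα
    let Gz : Matrix (Fin 6) (Fin 3) ℝ := Nz - N * No⁻¹ * Nγ
    let Gd : Fin 6 → ℝ := dbar - N *ᵥ (No⁻¹ *ᵥ Dn)
    IsUnit No →
      t = No⁻¹ *ᵥ (Dn - Nα *ᵥ r1 - Nγ *ᵥ r3) ∧ Gx *ᵥ r1 + Gz *ᵥ r3 = Gd := by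
  intro N Nx Nz No Nα Nγ Dn Gx Gz Gd hNo
  have hstack : (Nx *ᵥ r1 + Nz *ᵥ r3) + N *ᵥ t = dbar :=
    stacked_eq_of_forall_dotProduct_eq nbar xbar zbar dbar r1 r3 t hconstraints
  have hnormal : Nα *ᵥ r1 + Nγ *ᵥ r3 = Nᵀ *ᵥ (Nx *ᵥ r1 + Nz *ᵥ r3) := by
    simp only [Nα, Nγ, mulVec_add, mulVec_mulVec]
  refine ⟨?_, ?_⟩
  · rw [sub_sub, hnormal]
    exact eq_gram_inv_mulVec_of_add_mulVec_eq N hNo hstack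
  · calc Gx *ᵥ r1 + Gz *ᵥ r3
        = (Nx *ᵥ r1 + Nz *ᵥ r3) - N *ᵥ (No⁻¹ *ᵥ (Nᵀ *ᵥ (Nx *ᵥ r1 + Nz *ᵥ r3))) := by
          simp only [Gx, Gz, sub_mulVec, ← hnormal, mulVec_add, ← mulVec_mulVec]
          abel
      _ = Gd := sub_projection_mulVec_eq_of_add_mulVec_eq N hNo hstack
end

section
/- Let n1, n2, n3, n4 ∈ ℝ³ be vectors such that every 3-element subset of {n1, n2, n3, n4} is linearly independent, and let x1, x2, x3 ∈ ℝ be pairwise distinct. Define the re-indexed pairs (n̄_1, x̄_1) = (n1, x1), (n̄_2, x̄_2) = (n2, x2), (n̄_3, x̄_3) = (n3, x1), (n̄_4, x̄_4) = (n3, x3), (n̄_5, x̄_5) = (n4, x2), (n̄_6, x̄_6) = (n4, x3). Let N be the 6×3 matrix with i-th row n̄_iᵀ and N_x the 6×3 matrix with i-th row x̄_i·n̄_iᵀ, and set N_o = Nᵀ·N and G_x = N_x − N·N_o⁻¹·Nᵀ·N_x. Then the 3×3 matrix G_xᵀ·G_x is invertible (equivalently, G_x has rank 3). -/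
/-!
If `G_x v = 0`, then `N_x v = N w` with `w = N_o⁻¹ Nᵀ N_x v`, i.e. `n̄ᵢ ⬝ w = x̄ᵢ (n̄ᵢ ⬝ v)` for
all six rows. Since `n3` and `n4` each occur with two distinct abscissae, `v` and `w` are both
orthogonal to `n3` and `n4`. Then `w - x1 v` is orthogonal to `n1, n3, n4` and `w - x2 v` to
`n2, n3, n4`, so `w = x1 v = x2 v`, whence `v = 0`. Thus `G_x` is injective and `G_xᵀ G_x`
invertible.
-/

open Matrix

namespace Matrix

variable {m n K : Type*} [Fintype m] [Fintype n] [Field K]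

theorem isUnit_transpose_mul_self_of_mulVec_eq_zero [LinearOrder K] [IsStrictOrderedRing K]
    [DecidableEq n] (A : Matrix m n K) (hA : ∀ v, A *ᵥ v = 0 → v = 0) : IsUnit (Aᵀ * A) := by
  refine mulVec_injective_iff_isUnit.1 <| (injective_iff_map_eq_zero (Aᵀ * A).mulVecLin).2 ?_
  intro v hv
  have hker : v ∈ LinearMap.ker (Aᵀ * A).mulVecLin := hv
  rw [ker_mulVecLin_transpose_mul_self] at hker
  exact hA v hker

theorem eq_zero_of_forall_dotProduct_eq_zero [DecidableEq n] {b : n → n → K}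
    (hb : LinearIndependent K b) {v : n → K} (hv : ∀ i, b i ⬝ᵥ v = 0) : v = 0 :=
  mulVec_injective_iff_isUnit.2 (linearIndependent_rows_iff_isUnit.1 hb)
    ((funext hv).trans (mulVec_zero _).symm)

end Matrix

variable {K : Type*} [Field K]

theorem eq_smul_of_dotProduct_eq_mul {a b c v w : Fin 3 → K} {x : K}
    (habc : LinearIndependent K ![a, b, c]) (ha : a ⬝ᵥ w = x * (a ⬝ᵥ v))
    (hb : b ⬝ᵥ w = x * (b ⬝ᵥ v)) (hc : c ⬝ᵥ w = x * (c ⬝ᵥ v)) : w = x • v := by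
  refine sub_eq_zero.1 (eq_zero_of_forall_dotProduct_eq_zero habc ?_)
  simp [Fin.forall_fin_succ, dotProduct_sub, dotProduct_smul, ha, hb, hc]

theorem eq_zero_of_mul_eq_mul_of_ne {x y t s : K} (hxy : x ≠ y) (hx : s = x * t)
    (hy : s = y * t) : t = 0 :=
  (mul_eq_mul_right_iff.1 (hx.symm.trans hy)).resolve_left hxy

theorem eq_zero_of_dotProduct_eq_mul {n1 n2 n3 n4 v w : Fin 3 → K} {x1 x2 x3 : K}
    (h134 : LinearIndependent K ![n1, n3, n4]) (h234 : LinearIndependent K ![n2, n3, n4])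
    (hx12 : x1 ≠ x2) (hx13 : x1 ≠ x3) (hx23 : x2 ≠ x3)
    (h11 : n1 ⬝ᵥ w = x1 * (n1 ⬝ᵥ v)) (h22 : n2 ⬝ᵥ w = x2 * (n2 ⬝ᵥ v))
    (h31 : n3 ⬝ᵥ w = x1 * (n3 ⬝ᵥ v)) (h33 : n3 ⬝ᵥ w = x3 * (n3 ⬝ᵥ v))
    (h42 : n4 ⬝ᵥ w = x2 * (n4 ⬝ᵥ v)) (h43 : n4 ⬝ᵥ w = x3 * (n4 ⬝ᵥ v)) : v = 0 := by
  have hn3 : n3 ⬝ᵥ v = 0 := eq_zero_of_mul_eq_mul_of_ne hx13 h31 h33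
  have hn4 : n4 ⬝ᵥ v = 0 := eq_zero_of_mul_eq_mul_of_ne hx23 h42 h43
  have hw1 : w = x1 • v :=
    eq_smul_of_dotProduct_eq_mul h134 h11 h31 (by rw [h42, hn4, mul_zero, mul_zero])
  have hw2 : w = x2 • v :=
    eq_smul_of_dotProduct_eq_mul h234 h22 (by rw [h33, hn3, mul_zero, mul_zero]) h42
  by_contra hv
  exact hx12 (smul_left_injective K hv (hw1.symm.trans hw2))

theorem stmt_7_general (n1 n2 n3 n4 : Fin 3 → ℝ) (x1 x2 x3 : ℝ)
    (h134 : LinearIndependent ℝ ![n1, n3, n4])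
    (h234 : LinearIndependent ℝ ![n2, n3, n4])
    (hx12 : x1 ≠ x2) (hx13 : x1 ≠ x3) (hx23 : x2 ≠ x3) :
    let nbar : Fin 6 → (Fin 3 → ℝ) := ![n1, n2, n3, n3, n4, n4]
    let xbar : Fin 6 → ℝ := ![x1, x2, x1, x3, x2, x3]
    let N : Matrix (Fin 6) (Fin 3) ℝ := Matrix.of fun i j => nbar i j
    let Nx : Matrix (Fin 6) (Fin 3) ℝ := Matrix.of fun i j => xbar i * nbar i j
    let No : Matrix (Fin 3) (Fin 3) ℝ := Nᵀ * N
    let Gx : Matrix (Fin 6) (Fin 3) ℝ := Nx - N * No⁻¹ * (Nᵀ * Nx)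
    IsUnit (Gxᵀ * Gx) := by
  intro nbar xbar N Nx No Gx
  refine isUnit_transpose_mul_self_of_mulVec_eq_zero Gx fun v hv => ?_
  set w := (No⁻¹ * (Nᵀ * Nx)) *ᵥ v
  have hrange : Nx *ᵥ v = N *ᵥ w := by
    rwa [sub_mulVec, Matrix.mul_assoc, ← mulVec_mulVec, sub_eq_zero] at hv
  have hrow : ∀ i, nbar i ⬝ᵥ w = xbar i * (nbar i ⬝ᵥ v) := fun i => by
    simpa [Nx, N, mulVec, dotProduct, Finset.mul_sum, mul_assoc] using (congrFun hrange i).symm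
  exact eq_zero_of_dotProduct_eq_mul h134 h234 hx12 hx13 hx23
    (hrow 0) (hrow 1) (hrow 2) (hrow 3) (hrow 4) (hrow 5)

/-- STEP 2 of the analytical solution: the matrix `G_xᵀ·G_x` obtained after eliminating
the translation is invertible (equivalently `G_x` has full column rank 3). -/
theorem stmt_7 (n1 n2 n3 n4 : Fin 3 → ℝ) (x1 x2 x3 : ℝ)
    (h123 : LinearIndependent ℝ ![n1, n2, n3])
    (h124 : LinearIndependent ℝ ![n1, n2, n4])
    (h134 : LinearIndependent ℝ ![n1, n3, n4])
    (h234 : LinearIndependent ℝ ![n2, n3, n4])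
    (hx12 : x1 ≠ x2) (hx13 : x1 ≠ x3) (hx23 : x2 ≠ x3) :
    let nbar : Fin 6 → (Fin 3 → ℝ) := ![n1, n2, n3, n3, n4, n4]
    let xbar : Fin 6 → ℝ := ![x1, x2, x1, x3, x2, x3]
    let N : Matrix (Fin 6) (Fin 3) ℝ := Matrix.of fun i j => nbar i j
    let Nx : Matrix (Fin 6) (Fin 3) ℝ := Matrix.of fun i j => xbar i * nbar i j
    let No : Matrix (Fin 3) (Fin 3) ℝ := Nᵀ * N
    let Gx : Matrix (Fin 6) (Fin 3) ℝ := Nx - N * No⁻¹ * (Nᵀ * Nx)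
    IsUnit (Gxᵀ * Gx) :=
  stmt_7_general n1 n2 n3 n4 x1 x2 x3 h134 h234 hx12 hx13 hx23
end
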